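/- Let G act on Q, H ≤ G, and P ⊆ Q a G-independent set (distinct elements of P lie in distinct G-orbits) such that every q ∈ P satisfies |G·q|/|H·q| = |G|/|H|. Then the branches Qᵢ = Cᵢ(P) over the left cosets Cᵢ of H are pairwise disjoint. -/

import Mathlib

/-!
Counting the cosets of `H ⊓ Stab_G(q)` in `G` in two ways gives
`[Stab_G(q) : H ⊓ Stab_G(q)] · |G·q| = [G : H] · |H·q|`, so the hypothesis
`|G·q| / |H·q| = [G : H]` forces `Stab_G(q) ≤ H`. If `g₀h₀ • q = g₁h₁ • q'` with `q, q' ∈ P`,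
independence gives `q = q'`; then `(g₀h₀)⁻¹ g₁h₁` stabilizes `q`, hence lies in `H`, and the
cosets `g₀H` and `g₁H` coincide.
-/

open Pointwise MulAction

/-- The branch `C(P) = {g • q | g ∈ C, q ∈ P}`. -/
def branch {G Q : Type*} [Group G] [MulAction G Q] (C : Set G) (P : Set Q) : Set Q :=
  {x | ∃ g ∈ C, ∃ q ∈ P, g • q = x}

namespace MulAction

variable {G Q : Type*} [Group G] [MulAction G Q]

theorem card_orbit_subgroup_eq_relIndex (H : Subgroup G) (q : Q) :
    Nat.card (orbit H q) = (stabilizer G q).relIndex H := by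
  rw [Nat.card_coe_set_eq, ← index_stabilizer]
  rfl

theorem relIndex_stabilizer_mul_card_orbit (H : Subgroup G) (q : Q) :
    H.relIndex (stabilizer G q) * Nat.card (orbit G q) = H.index * Nat.card (orbit H q) := by
  set S := stabilizer G q
  rw [card_orbit_subgroup_eq_relIndex, Nat.card_coe_set_eq, ← index_stabilizer, mul_comm H.index]
  calc H.relIndex S * S.index = (H ⊓ S).relIndex S * S.index := by
        rw [Subgroup.inf_relIndex_right]
    _ = (H ⊓ S).index := Subgroup.relIndex_mul_index inf_le_right
    _ = (H ⊓ S).relIndex H * H.index := (Subgroup.relIndex_mul_index inf_le_left).symm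
    _ = S.relIndex H * H.index := by rw [Subgroup.inf_relIndex_left]

theorem stabilizer_le_of_index_mul_card_orbit_le [Finite G] {H : Subgroup G} {q : Q}
    (h : H.index * Nat.card (orbit H q) ≤ Nat.card (orbit G q)) : stabilizer G q ≤ H := by
  have horbit : 0 < Nat.card (orbit G q) := by
    rw [Nat.card_coe_set_eq, ← index_stabilizer]
    exact Nat.pos_of_ne_zero (stabilizer G q).index_ne_zero_of_finite
  rw [← relIndex_stabilizer_mul_card_orbit] at h
  have hle : H.relIndex (stabilizer G q) ≤ 1 :=
    Nat.le_of_mul_le_mul_right (by rwa [one_mul]) horbit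
  have hne : H.relIndex (stabilizer G q) ≠ 0 := (H.subgroupOf _).index_ne_zero_of_finite
  exact Subgroup.relIndex_eq_one.mp (by omega)

theorem stabilizer_le_of_card_orbit_div_eq [Finite G] {H : Subgroup G} {q : Q}
    (h : Nat.card (orbit G q) / Nat.card (orbit H q) = Nat.card G / Nat.card H) :
    stabilizer G q ≤ H := by
  have hindex : Nat.card G / Nat.card H = H.index :=
    Nat.div_eq_of_eq_mul_right Nat.card_pos H.card_mul_index.symm
  apply stabilizer_le_of_index_mul_card_orbit_le
  rw [← hindex, ← h]
  exact Nat.div_mul_le_self _ _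

theorem leftCoset_eq_of_smul_eq_smul {H : Subgroup G} {q : Q} (hq : stabilizer G q ≤ H)
    {a b : G} (h : a • q = b • q) : a • (H : Set G) = b • (H : Set G) := by
  refine (leftCoset_eq_iff H).mpr (hq ?_)
  rw [mem_stabilizer_iff, mul_smul, ← h, inv_smul_smul]

theorem eq_of_smul_eq_smul_of_orbit_ne {P : Set Q}
    (hP : ∀ q₁ ∈ P, ∀ q₂ ∈ P, q₁ ≠ q₂ → orbit G q₁ ≠ orbit G q₂) {q₁ q₂ : Q}
    (hq₁ : q₁ ∈ P) (hq₂ : q₂ ∈ P) {a b : G} (h : a • q₁ = b • q₂) : q₁ = q₂ := by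
  by_contra hne
  exact hP q₁ hq₁ q₂ hq₂ hne (by rw [← orbit_smul a, h, orbit_smul])

end MulAction

theorem branches_pairwise_disjoint_general (G Q : Type*) [Group G] [Finite G] [MulAction G Q]
    (H : Subgroup G) (P : Set Q)
    (hindep : ∀ q₁ ∈ P, ∀ q₂ ∈ P, q₁ ≠ q₂ → orbit G q₁ ≠ orbit G q₂)
    (hwb : ∀ q ∈ P,
      Nat.card (orbit G q) / Nat.card (orbit H q) = Nat.card G / Nat.card H) :
    ∀ g₀ g₁ : G, g₀ • (H : Set G) ≠ g₁ • (H : Set G) →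
      Disjoint (branch (g₀ • (H : Set G)) P) (branch (g₁ • (H : Set G)) P) := by
  intro g₀ g₁ hne
  refine Set.disjoint_left.mpr ?_
  rintro _ ⟨_, ⟨h₀, hh₀, rfl⟩, q, hq, rfl⟩ ⟨_, ⟨h₁, hh₁, rfl⟩, q', hq', hx⟩
  obtain rfl := eq_of_smul_eq_smul_of_orbit_ne hindep hq hq' hx.symm
  refine hne ?_
  have hcoset := leftCoset_eq_of_smul_eq_smul (stabilizer_le_of_card_orbit_div_eq (hwb q hq)) hx
  simpa only [smul_eq_mul, ← smul_smul, leftCoset_mem_leftCoset _ hh₀,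
    leftCoset_mem_leftCoset _ hh₁] using hcoset.symm

/-- Let a finite group `G` act on a finite set `Q`, `H ≤ G`, and let `P ⊆ Q` be
`G`-independent (distinct elements of `P` lie in distinct `G`-orbits) with every `q ∈ P`
well-behaved for `H` (`|G·q|/|H·q| = |G|/|H|`).  Then the branches `Cᵢ(P)` over distinct
left cosets of `H` are pairwise disjoint. -/
theorem branches_pairwise_disjoint (G Q : Type*) [Group G] [Finite G] [MulAction G Q]
    [Finite Q] (H : Subgroup G) (P : Set Q)
    (hindep : ∀ q₁ ∈ P, ∀ q₂ ∈ P, q₁ ≠ q₂ → orbit G q₁ ≠ orbit G q₂)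
    (hwb : ∀ q ∈ P,
      Nat.card (orbit G q) / Nat.card (orbit H q) = Nat.card G / Nat.card H) :
    ∀ g₀ g₁ : G, g₀ • (H : Set G) ≠ g₁ • (H : Set G) →
      Disjoint (branch (g₀ • (H : Set G)) P) (branch (g₁ • (H : Set G)) P) :=
  branches_pairwise_disjoint_general G Q H P hindep hwb
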